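/- Let T₁, T₂ be independent, T_i ~ Gamma(m_i, σ_i) with integer m_i ≥ 1 and 0 < σ₁ ≤ σ₂, and fix p ≠ 0. Let d₀₂ = p⁻¹(1 - e^{-p/(m₂+1)}) and e₂ = p⁻¹(1 - e^{-p/(m₁+m₂+1)}). Define the truncated estimator δ(T₁,T₂) = max{d₀₂, e₂(1 + T₁/T₂)}·T₂. If P(d₀₂ < e₂(1 + T₁/T₂)) > 0, then the linex risk E[exp(p(δ/σ₂ - 1)) - p(δ/σ₂ - 1) - 1] of δ is strictly smaller than that of the unrestricted estimator d₀₂T₂. -/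

import Mathlib

/-
Given `T₁ / T₂ = v`, the pair has joint density proportional to
`v ^ (m₁ - 1) * t ^ (m₁ + m₂ - 1) * exp (-(1 / σ₂ + v / σ₁) * t)`, so `T₂` is conditionally
gamma with rate `λ v = 1 / σ₂ + v / σ₁`, and the risk of an estimator `κ (T₁ / T₂) * T₂` is an
integral over `v > 0` of an explicit conditional risk (`linexRisk`) evaluated at `κ v / σ₂`.
As a function of `x = λ v - p * c`, that conditional risk is `a * x⁻⁽ⁿ⁺¹⁾ + b * x` plus a
constant, so it strictly decreases in `c` up to its minimiser `λ v * e₂`. Because `σ₁ ≤ σ₂`,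
the truncation value `e₂ * (1 + v) / σ₂` lies below that minimiser, so replacing `d₀₂ / σ₂` by
it lowers the conditional risk, strictly on the half-line `v > d₀₂ / e₂`.
-/

open MeasureTheory ProbabilityTheory Real Set
open scoped ENNReal Nat

theorem integral_pow_mul_exp_neg_mul_Ioi (n : ℕ) {b : ℝ} (hb : 0 < b) :
    ∫ t in Ioi 0, t ^ n * exp (-(b * t)) = n ! / b ^ (n + 1) := by
  have h := integral_rpow_mul_exp_neg_mul_Ioi (a := n + 1) (by positivity) hb
  simp only [add_sub_cancel_right, rpow_natCast] at h
  rw [h, Gamma_nat_eq_factorial, ← Nat.cast_add_one, rpow_natCast, one_div, inv_pow]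
  ring

theorem integrableOn_pow_mul_exp_neg_mul_Ioi (n : ℕ) {b : ℝ} (hb : 0 < b) :
    IntegrableOn (fun t ↦ t ^ n * exp (-(b * t))) (Ioi 0) :=
  .of_integral_ne_zero (by rw [integral_pow_mul_exp_neg_mul_Ioi n hb]; positivity)

theorem lintegral_Ioi_eq_ofReal_mul_lintegral_comp_mul_left (f : ℝ → ℝ≥0∞) {b : ℝ}
    (hb : 0 < b) : ∫⁻ x in Ioi 0, f x = ENNReal.ofReal b * ∫⁻ x in Ioi 0, f (b * x) := by
  let e := (Homeomorph.mulLeft₀ b hb.ne').toMeasurableEquiv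
  have he : ⇑e = (b * ·) := rfl
  have hmap : (volume.restrict (Ioi 0)).map e = ENNReal.ofReal b⁻¹ • volume.restrict (Ioi 0) := by
    have hpre : e ⁻¹' Ioi 0 = Ioi 0 := by
      ext x; simp [he, mul_pos_iff_of_pos_left hb]
    rw [← hpre, ← e.restrict_map, hpre, he, map_volume_mul_left hb.ne', abs_of_pos (inv_pos.mpr hb),
      Measure.restrict_smul]
  rw [show ∫⁻ x in Ioi 0, f (b * x) = ∫⁻ x in Ioi 0, f (e x) from rfl, ← lintegral_map_equiv,
    hmap, lintegral_smul_measure, smul_eq_mul, ← mul_assoc,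
    ← ENNReal.ofReal_mul hb.le, mul_inv_cancel₀ hb.ne', ENNReal.ofReal_one, one_mul]

section InvPowAddMul

variable {a b x₀ : ℝ} {n : ℕ}

theorem hasDerivAt_mul_inv_pow_add_mul {x : ℝ} (hx : x ≠ 0) :
    HasDerivAt (fun x ↦ a * (x ^ (n + 1))⁻¹ + b * x)
      ((b * x ^ (n + 2) - (n + 1) * a) / x ^ (n + 2)) x := by
  have h := (((hasDerivAt_pow (n + 1) x).inv (pow_ne_zero _ hx)).const_mul a).add
    ((hasDerivAt_id x).const_mul b)
  refine h.congr_deriv ?_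
  field_simp
  push_cast
  ring

theorem strictMonoOn_mul_inv_pow_add_mul (hb : 0 < b) (hx₀ : 0 < x₀)
    (h : b * x₀ ^ (n + 2) = (n + 1) * a) :
    StrictMonoOn (fun x ↦ a * (x ^ (n + 1))⁻¹ + b * x) (Ici x₀) := by
  refine strictMonoOn_of_deriv_pos (convex_Ici x₀)
    (fun x hx ↦ (hasDerivAt_mul_inv_pow_add_mul (hx₀.trans_le hx).ne').continuousAt
      |>.continuousWithinAt) fun x hx ↦ ?_
  rw [interior_Ici] at hx
  have hx' : 0 < x := hx₀.trans hx
  rw [(hasDerivAt_mul_inv_pow_add_mul hx'.ne').deriv]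
  have : x₀ ^ (n + 2) < x ^ (n + 2) := pow_lt_pow_left₀ hx hx₀.le (by omega)
  exact div_pos (by nlinarith) (by positivity)

theorem strictAntiOn_mul_inv_pow_add_mul (hb : 0 < b) (h : b * x₀ ^ (n + 2) = (n + 1) * a) :
    StrictAntiOn (fun x ↦ a * (x ^ (n + 1))⁻¹ + b * x) (Ioc 0 x₀) := by
  refine strictAntiOn_of_deriv_neg (convex_Ioc 0 x₀)
    (fun x hx ↦ (hasDerivAt_mul_inv_pow_add_mul hx.1.ne').continuousAt
      |>.continuousWithinAt) fun x hx ↦ ?_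
  rw [interior_Ioc] at hx
  rw [(hasDerivAt_mul_inv_pow_add_mul hx.1.ne').deriv]
  have : x ^ (n + 2) < x₀ ^ (n + 2) := pow_lt_pow_left₀ hx.2 hx.1.le (by omega)
  exact div_neg_of_neg_of_pos (by nlinarith) (pow_pos hx.1 _)

end InvPowAddMul

instance (a r : ℝ) : SFinite (gammaMeasure a r) := by
  unfold gammaMeasure
  infer_instance

@[fun_prop]
theorem measurable_gammaPDF (a r : ℝ) : Measurable (gammaPDF a r) :=
  (measurable_gammaPDFReal a r).ennreal_ofReal

theorem lintegral_gammaMeasure {f : ℝ → ℝ≥0∞} (hf : Measurable f) (a r : ℝ) :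
    ∫⁻ x, f x ∂gammaMeasure a r = ∫⁻ x in Ioi 0, gammaPDF a r x * f x := by
  rw [gammaMeasure, lintegral_withDensity_eq_lintegral_mul _ (measurable_gammaPDF a r) hf,
    setLIntegral_congr Ioi_ae_eq_Ici, setLIntegral_eq_of_support_subset]
  · rfl
  · intro x hx
    by_contra h
    exact hx (by simp [gammaPDF_of_neg (not_le.mp h)])

theorem lintegral_gammaMeasure_prod_comp_div (a₁ r₁ a₂ r₂ : ℝ) {g : ℝ → ℝ → ℝ≥0∞}
    (hg : Measurable (Function.uncurry g)) :
    ∫⁻ z, g (z.1 / z.2) z.2 ∂(gammaMeasure a₁ r₁).prod (gammaMeasure a₂ r₂)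
      = ∫⁻ v in Ioi 0, ∫⁻ t in Ioi 0,
          gammaPDF a₁ r₁ (t * v) * gammaPDF a₂ r₂ t * ENNReal.ofReal t * g v t := by
  have hG : Measurable fun z : ℝ × ℝ ↦ g (z.1 / z.2) z.2 :=
    hg.comp ((measurable_fst.div measurable_snd).prodMk measurable_snd)
  rw [lintegral_prod_symm _ hG.aemeasurable, lintegral_gammaMeasure hG.lintegral_prod_left',
    lintegral_lintegral_swap]
  · refine setLIntegral_congr_fun measurableSet_Ioi fun t (ht : 0 < t) ↦ ?_
    dsimp only
    rw [lintegral_gammaMeasure (f := fun x ↦ g (x / t) t)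
        (hg.comp ((measurable_id.div_const t).prodMk measurable_const)),
      lintegral_Ioi_eq_ofReal_mul_lintegral_comp_mul_left _ ht, ← mul_assoc,
      ← lintegral_const_mul' (gammaPDF a₂ r₂ t * ENNReal.ofReal t) _
        (ENNReal.mul_ne_top ENNReal.ofReal_ne_top ENNReal.ofReal_ne_top)]
    refine setLIntegral_congr_fun measurableSet_Ioi fun v _ ↦ ?_
    simp only [mul_div_cancel_left₀ _ ht.ne']
    ring
  · exact Measurable.aemeasurable (by fun_prop)

theorem gammaPDF_natCast_add_one (k : ℕ) (r : ℝ) {x : ℝ} (hx : 0 ≤ x) :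
    gammaPDF (k + 1 : ℕ) r x = ENNReal.ofReal (r ^ (k + 1) / k ! * x ^ k * exp (-(r * x))) := by
  rw [gammaPDF_of_nonneg hx, Nat.cast_add_one, Gamma_nat_eq_factorial, add_sub_cancel_right,
    ← Nat.cast_add_one, rpow_natCast, rpow_natCast]

noncomputable section

def linexLoss (p y : ℝ) : ℝ := exp (p * (y - 1)) - p * (y - 1) - 1

def linexCoeff (p a : ℝ) : ℝ := p⁻¹ * (1 - exp (-p / a))

/-- Closed form of `∫ t in Ioi 0, linexLoss p (c * t) * (t ^ n * exp (-(r * t)))`. -/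
def linexRisk (p : ℝ) (n : ℕ) (r c : ℝ) : ℝ :=
  exp (-p) * n ! / (r - p * c) ^ (n + 1) - p * c * (n + 1)! / r ^ (n + 2)
    + (p - 1) * n ! / r ^ (n + 1)

end

theorem linexLoss_nonneg (p y : ℝ) : 0 ≤ linexLoss p y := by
  have := add_one_le_exp (p * (y - 1))
  unfold linexLoss
  linarith

@[fun_prop]
theorem continuous_linexLoss (p : ℝ) : Continuous (linexLoss p) := by
  unfold linexLoss
  fun_prop

theorem linexCoeff_pos {p a : ℝ} (hp : p ≠ 0) (ha : 0 < a) : 0 < linexCoeff p a := by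
  unfold linexCoeff
  rcases hp.lt_or_gt with hp | hp
  · have : 1 < exp (-p / a) := one_lt_exp_iff.mpr (div_pos (neg_pos.mpr hp) ha)
    exact mul_pos_of_neg_of_neg (inv_lt_zero.mpr hp) (by linarith)
  · have : exp (-p / a) < 1 := exp_lt_one_iff.mpr (div_neg_of_neg_of_pos (neg_neg_of_pos hp) ha)
    exact mul_pos (inv_pos.mpr hp) (by linarith)

theorem mul_linexCoeff_lt_one (p a : ℝ) : p * linexCoeff p a < 1 := by
  unfold linexCoeff
  rcases eq_or_ne p 0 with rfl | hp
  · simp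
  · rw [← mul_assoc, mul_inv_cancel₀ hp, one_mul]
    linarith [exp_pos (-p / a)]

theorem mul_linexCoeff_div_lt_one_div (p a : ℝ) {σ : ℝ} (hσ : 0 < σ) :
    p * (linexCoeff p a / σ) < 1 / σ :=
  mul_div_assoc' p _ σ ▸ div_lt_div_of_pos_right (mul_linexCoeff_lt_one p a) hσ

theorem linexLoss_mul_mul_pow_mul_exp (p c r t : ℝ) (n : ℕ) :
    linexLoss p (c * t) * (t ^ n * exp (-(r * t)))
      = exp (-p) * (t ^ n * exp (-((r - p * c) * t))) - p * c * (t ^ (n + 1) * exp (-(r * t)))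
        + (p - 1) * (t ^ n * exp (-(r * t))) := by
  have h₁ : exp (p * (c * t - 1)) * exp (-(r * t)) = exp (-p) * exp (-((r - p * c) * t)) := by
    rw [← exp_add, ← exp_add]; ring_nf
  unfold linexLoss
  linear_combination t ^ n * h₁

section LinexIntegral

variable {p c r : ℝ} (n : ℕ)

theorem integrableOn_linexLoss_mul_pow_mul_exp (hr : 0 < r) (hpc : p * c < r) :
    IntegrableOn (fun t ↦ linexLoss p (c * t) * (t ^ n * exp (-(r * t)))) (Ioi 0) := by
  simp only [linexLoss_mul_mul_pow_mul_exp]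
  exact ((((integrableOn_pow_mul_exp_neg_mul_Ioi n (sub_pos.mpr hpc)).const_mul _).sub
    ((integrableOn_pow_mul_exp_neg_mul_Ioi (n + 1) hr).const_mul _)).add
    ((integrableOn_pow_mul_exp_neg_mul_Ioi n hr).const_mul _))

theorem integral_linexLoss_mul_pow_mul_exp (hr : 0 < r) (hpc : p * c < r) :
    ∫ t in Ioi 0, linexLoss p (c * t) * (t ^ n * exp (-(r * t))) = linexRisk p n r c := by
  have h₁ := (integrableOn_pow_mul_exp_neg_mul_Ioi n (sub_pos.mpr hpc)).const_mul (exp (-p))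
  have h₂ := (integrableOn_pow_mul_exp_neg_mul_Ioi (n + 1) hr).const_mul (p * c)
  have h₃ := (integrableOn_pow_mul_exp_neg_mul_Ioi n hr).const_mul (p - 1)
  simp only [linexLoss_mul_mul_pow_mul_exp]
  rw [integral_add (f := fun t ↦ _ - _) (h₁.sub h₂) h₃, integral_sub h₁ h₂, integral_const_mul,
    integral_const_mul, integral_const_mul, integral_pow_mul_exp_neg_mul_Ioi n (sub_pos.mpr hpc),
    integral_pow_mul_exp_neg_mul_Ioi (n + 1) hr, integral_pow_mul_exp_neg_mul_Ioi n hr, linexRisk]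
  ring

theorem linexRisk_nonneg (hr : 0 < r) (hpc : p * c < r) : 0 ≤ linexRisk p n r c := by
  rw [← integral_linexLoss_mul_pow_mul_exp n hr hpc]
  exact setIntegral_nonneg measurableSet_Ioi fun t (ht : 0 < t) ↦
    mul_nonneg (linexLoss_nonneg _ _) (by positivity)

theorem lintegral_linexLoss_mul_pow_mul_exp (hr : 0 < r) (hpc : p * c < r) :
    ∫⁻ t in Ioi 0, ENNReal.ofReal (linexLoss p (c * t) * (t ^ n * exp (-(r * t))))
      = ENNReal.ofReal (linexRisk p n r c) := by
  rw [← integral_linexLoss_mul_pow_mul_exp n hr hpc, ofReal_integral_eq_lintegral_ofReal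
    (integrableOn_linexLoss_mul_pow_mul_exp n hr hpc)]
  exact (ae_restrict_iff' measurableSet_Ioi).mpr (.of_forall fun t (ht : 0 < t) ↦
    mul_nonneg (linexLoss_nonneg _ _) (by positivity))

end LinexIntegral

section LinexRisk

variable {p r c₁ c₂ : ℝ} {n : ℕ}

theorem linexRisk_eq_mul_inv_pow_add_mul (hr : r ≠ 0) (c : ℝ) :
    linexRisk p n r c = exp (-p) * n ! * ((r - p * c) ^ (n + 1))⁻¹
      + (n + 1)! / r ^ (n + 2) * (r - p * c) + ((p - 1) * (n ! : ℝ) - (n + 1)!) / r ^ (n + 1) := by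
  unfold linexRisk
  field_simp
  ring

-- The critical point `x₀ = r * exp (-p / (n + 2))` of the `x = r - p * c` form is the value of
-- `x` at `c = r * linexCoeff p (n + 2)`.
theorem linexRisk_lt_linexRisk (hp : p ≠ 0) (hr : 0 < r) (h₁ : p * c₁ < r) (h₁₂ : c₁ < c₂)
    (h₂ : c₂ ≤ r * linexCoeff p (n + 2)) : linexRisk p n r c₂ < linexRisk p n r c₁ := by
  have hx₀ : 0 < r * exp (-p / (n + 2)) := by positivity
  have hcrit : (n + 1)! / r ^ (n + 2) * (r * exp (-p / (n + 2))) ^ (n + 2)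
      = (n + 1) * (exp (-p) * n !) := by
    have : exp (-p / (n + 2)) ^ (n + 2) = exp (-p) := by
      rw [← exp_nat_mul]; push_cast; field_simp
    rw [mul_pow, this, Nat.factorial_succ]
    field_simp
    push_cast
    ring
  have hb : (0 : ℝ) < (n + 1)! / r ^ (n + 2) := by positivity
  have hx : r - p * (r * linexCoeff p (n + 2)) = r * exp (-p / (n + 2)) := by
    unfold linexCoeff; field_simp; ring
  rw [linexRisk_eq_mul_inv_pow_add_mul hr.ne', linexRisk_eq_mul_inv_pow_add_mul hr.ne',
    add_lt_add_iff_right]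
  rcases hp.lt_or_gt with hp | hp
  · have := mul_le_mul_of_nonpos_left h₂ hp.le
    have := mul_lt_mul_of_neg_left h₁₂ hp
    exact strictAntiOn_mul_inv_pow_add_mul hb hcrit ⟨by linarith, by linarith⟩
      ⟨by linarith, by linarith⟩ (by linarith)
  · have := mul_le_mul_of_nonneg_left h₂ hp.le
    have := mul_lt_mul_of_pos_left h₁₂ hp
    exact strictMonoOn_mul_inv_pow_add_mul hb hx₀ hcrit (by simp only [mem_Ici]; linarith)
      (by simp only [mem_Ici]; linarith) (by linarith)

theorem mul_max_lt_of_le_mul_linexCoeff {a : ℝ} (hr : 0 < r) (h₁ : p * c₁ < r)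
    (h₂ : c₂ ≤ r * linexCoeff p a) : p * max c₁ c₂ < r := by
  rcases le_total c₁ c₂ with h | h
  · rw [max_eq_right h]
    rcases le_or_gt p 0 with hp | hp
    · nlinarith
    · nlinarith [mul_linexCoeff_lt_one p a]
  · rwa [max_eq_left h]

theorem linexRisk_max_le (hp : p ≠ 0) (hr : 0 < r) (h₁ : p * c₁ < r)
    (h₂ : c₂ ≤ r * linexCoeff p (n + 2)) : linexRisk p n r (max c₁ c₂) ≤ linexRisk p n r c₁ := by
  rcases le_or_gt c₂ c₁ with h | h
  · rw [max_eq_left h]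
  · rw [max_eq_right h.le]
    exact (linexRisk_lt_linexRisk hp hr h₁ h h₂).le

end LinexRisk

theorem lintegral_linexLoss_gammaMeasure {p r c : ℝ} (k : ℕ) (hr : 0 < r) (hpc : p * c < r) :
    ∫⁻ t, ENNReal.ofReal (linexLoss p (c * t)) ∂gammaMeasure (k + 1 : ℕ) r
      = ENNReal.ofReal (r ^ (k + 1) / k !) * ENNReal.ofReal (linexRisk p k r c) := by
  rw [lintegral_gammaMeasure (by fun_prop), ← lintegral_linexLoss_mul_pow_mul_exp k hr hpc,
    ← lintegral_const_mul' _ _ ENNReal.ofReal_ne_top]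
  refine setLIntegral_congr_fun measurableSet_Ioi fun t (ht : 0 < t) ↦ ?_
  rw [gammaPDF_natCast_add_one k r ht.le, ← ENNReal.ofReal_mul (by positivity),
    ← ENNReal.ofReal_mul (by positivity)]
  congr 1
  ring

theorem lintegral_linexLoss_gammaMeasure_prod {p r₁ r₂ : ℝ} (k₁ k₂ : ℕ) (hr₁ : 0 < r₁)
    (hr₂ : 0 < r₂) {κ : ℝ → ℝ} (hκ : Measurable κ) (hdom : ∀ v, 0 < v → p * κ v < r₂ + r₁ * v) :
    ∫⁻ z, ENNReal.ofReal (linexLoss p (κ (z.1 / z.2) * z.2))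
        ∂(gammaMeasure (k₁ + 1 : ℕ) r₁).prod (gammaMeasure (k₂ + 1 : ℕ) r₂)
      = ∫⁻ v in Ioi 0, ENNReal.ofReal (r₁ ^ (k₁ + 1) * r₂ ^ (k₂ + 1) / (k₁ ! * k₂ !) * v ^ k₁)
          * ENNReal.ofReal (linexRisk p (k₁ + k₂ + 1) (r₂ + r₁ * v) (κ v)) := by
  rw [lintegral_gammaMeasure_prod_comp_div _ _ _ _
    (g := fun v t ↦ ENNReal.ofReal (linexLoss p (κ v * t))) (by fun_prop)]
  refine setLIntegral_congr_fun measurableSet_Ioi fun v (hv : 0 < v) ↦ ?_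
  rw [← lintegral_linexLoss_mul_pow_mul_exp _ (by positivity) (hdom v hv),
    ← lintegral_const_mul' _ _ ENNReal.ofReal_ne_top]
  refine setLIntegral_congr_fun measurableSet_Ioi fun t (ht : 0 < t) ↦ ?_
  rw [gammaPDF_natCast_add_one k₁ r₁ (by positivity), gammaPDF_natCast_add_one k₂ r₂ ht.le,
    ← ENNReal.ofReal_mul (by positivity), ← ENNReal.ofReal_mul (by positivity),
    ← ENNReal.ofReal_mul (by positivity), ← ENNReal.ofReal_mul (by positivity)]
  congr 1
  have : exp (-((r₂ + r₁ * v) * t)) = exp (-(r₁ * (t * v))) * exp (-(r₂ * t)) := by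
    rw [← exp_add]; ring_nf
  rw [this]
  ring

theorem lintegral_prod_linexLoss_mul_snd_ne_top {α : Type*} [MeasurableSpace α] (μ : Measure α)
    [IsFiniteMeasure μ] {p r c : ℝ} (k : ℕ) (hr : 0 < r) (hpc : p * c < r) :
    ∫⁻ z, ENNReal.ofReal (linexLoss p (c * z.2)) ∂μ.prod (gammaMeasure (k + 1 : ℕ) r) ≠ ⊤ := by
  have h := lintegral_prod_mul (μ := μ) (ν := gammaMeasure (k + 1 : ℕ) r) (f := 1)
    (g := fun t ↦ ENNReal.ofReal (linexLoss p (c * t))) aemeasurable_const (by fun_prop)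
  simp only [Pi.one_apply, one_mul, lintegral_const] at h
  rw [h, lintegral_linexLoss_gammaMeasure k hr hpc]
  exact ENNReal.mul_ne_top (measure_ne_top μ univ)
    (ENNReal.mul_ne_top ENNReal.ofReal_ne_top ENNReal.ofReal_ne_top)

section Domination

variable {p σ₁ σ₂ : ℝ} (k₁ k₂ : ℕ)

theorem lintegral_linexLoss_truncated_lt (hp : p ≠ 0) (hσ₁ : 0 < σ₁) (hσ : σ₁ ≤ σ₂) :
    ∫⁻ z, ENNReal.ofReal (linexLoss p (max (linexCoeff p (k₂ + 2))
        (linexCoeff p ((k₁ + k₂ + 1 : ℕ) + 2) * (1 + z.1 / z.2)) / σ₂ * z.2))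
        ∂(gammaMeasure (k₁ + 1 : ℕ) (1 / σ₁)).prod (gammaMeasure (k₂ + 1 : ℕ) (1 / σ₂))
      < ∫⁻ z, ENNReal.ofReal (linexLoss p (linexCoeff p (k₂ + 2) / σ₂ * z.2))
        ∂(gammaMeasure (k₁ + 1 : ℕ) (1 / σ₁)).prod (gammaMeasure (k₂ + 1 : ℕ) (1 / σ₂)) := by
  set d := linexCoeff p (k₂ + 2)
  set e := linexCoeff p ((k₁ + k₂ + 1 : ℕ) + 2)
  have hσ₂ : 0 < σ₂ := hσ₁.trans_le hσ
  have he : 0 < e := linexCoeff_pos hp (by positivity)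
  have hr (v : ℝ) (hv : 0 < v) : 0 < 1 / σ₂ + 1 / σ₁ * v := by positivity
  have hpd : p * (d / σ₂) < 1 / σ₂ := mul_linexCoeff_div_lt_one_div _ _ hσ₂
  have h₁ (v : ℝ) (hv : 0 < v) : p * (d / σ₂) < 1 / σ₂ + 1 / σ₁ * v := by
    have : 0 < 1 / σ₁ * v := by positivity
    linarith
  have h₂ (v : ℝ) (hv : 0 < v) : e * (1 + v) / σ₂ ≤ (1 / σ₂ + 1 / σ₁ * v) * e := by
    have : e * v / σ₂ ≤ e * v / σ₁ := div_le_div_of_nonneg_left (by positivity) hσ₁ hσ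
    calc e * (1 + v) / σ₂ = e / σ₂ + e * v / σ₂ := by ring
      _ ≤ e / σ₂ + e * v / σ₁ := by linarith
      _ = _ := by ring
  have := isProbabilityMeasure_gammaMeasure (a := (k₁ + 1 : ℕ)) (by positivity)
    (one_div_pos.mpr hσ₁)
  have hfin := lintegral_prod_linexLoss_mul_snd_ne_top
    (gammaMeasure (k₁ + 1 : ℕ) (1 / σ₁)) k₂ (one_div_pos.mpr hσ₂) hpd
  simp_rw [← max_div_div_right hσ₂.le]
  rw [lintegral_linexLoss_gammaMeasure_prod k₁ k₂ (by positivity) (by positivity)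
    (κ := fun v ↦ max (d / σ₂) (e * (1 + v) / σ₂)) (by fun_prop)
    fun v hv ↦ mul_max_lt_of_le_mul_linexCoeff (hr v hv) (h₁ v hv) (h₂ v hv)]
  rw [lintegral_linexLoss_gammaMeasure_prod k₁ k₂ (by positivity) (by positivity)
    (κ := fun _ ↦ d / σ₂) (by fun_prop) h₁] at hfin ⊢
  have hle : ∀ᵐ v ∂volume.restrict (Ioi 0),
      ENNReal.ofReal (linexRisk p (k₁ + k₂ + 1) (1 / σ₂ + 1 / σ₁ * v)
          (max (d / σ₂) (e * (1 + v) / σ₂)))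
        ≤ ENNReal.ofReal (linexRisk p (k₁ + k₂ + 1) (1 / σ₂ + 1 / σ₁ * v) (d / σ₂)) :=
    (ae_restrict_iff' measurableSet_Ioi).mpr (.of_forall fun v hv ↦
      ENNReal.ofReal_le_ofReal (linexRisk_max_le hp (hr v hv) (h₁ v hv) (h₂ v hv)))
  refine lintegral_strict_mono_of_ae_le_of_ae_lt_on
    (Measurable.aemeasurable (by unfold linexRisk; fun_prop))
    (ne_top_of_le_ne_top hfin (lintegral_mono_ae (hle.mono fun v hv ↦ mul_le_mul_right hv _)))
    (hle.mono fun v hv ↦ mul_le_mul_right hv _) (s := Ioi (d / e)) ?_ ?_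
  · rw [Measure.restrict_apply measurableSet_Ioi, Ioi_inter_Ioi, volume_Ioi]
    exact ENNReal.top_ne_zero
  refine (ae_restrict_iff' measurableSet_Ioi).mpr
    (.of_forall fun v (hv : 0 < v) (hvd : d / e < v) ↦ ?_)
  have hde : d / σ₂ < e * (1 + v) / σ₂ := by
    rw [div_lt_iff₀ he] at hvd
    exact div_lt_div_of_pos_right (by nlinarith) hσ₂
  have hdom := mul_max_lt_of_le_mul_linexCoeff (hr v hv) (h₁ v hv) (h₂ v hv)
  rw [max_eq_right hde.le] at hdom ⊢
  refine ENNReal.mul_lt_mul_right (ENNReal.ofReal_pos.mpr (by positivity)).ne'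
    ENNReal.ofReal_ne_top ?_
  exact (ENNReal.ofReal_lt_ofReal_iff_of_nonneg (linexRisk_nonneg _ (hr v hv) hdom)).mpr
    (linexRisk_lt_linexRisk hp (hr v hv) (h₁ v hv) hde (h₂ v hv))

theorem integral_linexLoss_truncated_lt (hp : p ≠ 0) (hσ₁ : 0 < σ₁) (hσ : σ₁ ≤ σ₂) :
    ∫ z, linexLoss p (max (linexCoeff p (k₂ + 2))
        (linexCoeff p ((k₁ + k₂ + 1 : ℕ) + 2) * (1 + z.1 / z.2)) / σ₂ * z.2)
        ∂(gammaMeasure (k₁ + 1 : ℕ) (1 / σ₁)).prod (gammaMeasure (k₂ + 1 : ℕ) (1 / σ₂))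
      < ∫ z, linexLoss p (linexCoeff p (k₂ + 2) / σ₂ * z.2)
        ∂(gammaMeasure (k₁ + 1 : ℕ) (1 / σ₁)).prod (gammaMeasure (k₂ + 1 : ℕ) (1 / σ₂)) := by
  have := isProbabilityMeasure_gammaMeasure (a := (k₁ + 1 : ℕ)) (by positivity)
    (one_div_pos.mpr hσ₁)
  have hσ₂ : 0 < σ₂ := hσ₁.trans_le hσ
  rw [integral_eq_lintegral_of_nonneg_ae (.of_forall fun _ ↦ linexLoss_nonneg _ _) (by fun_prop),
    integral_eq_lintegral_of_nonneg_ae (.of_forall fun _ ↦ linexLoss_nonneg _ _) (by fun_prop)]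
  refine ENNReal.toReal_strict_mono ?_ (lintegral_linexLoss_truncated_lt k₁ k₂ hp hσ₁ hσ)
  exact lintegral_prod_linexLoss_mul_snd_ne_top _ k₂ (one_div_pos.mpr hσ₂)
    (mul_linexCoeff_div_lt_one_div _ _ hσ₂)

end Domination

/-- Corollary 2.3(ii) for `k = 2`: with independent `Tᵢ ~ Gamma(mᵢ, σᵢ)` (rates `1/σᵢ`)
and `0 < σ₁ ≤ σ₂`, the truncated estimator
`δ = max {d₀₂, e₂ (1 + T₁/T₂)} ⬝ T₂` has strictly smaller linex risk for `σ₂` than the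
unrestricted best affine/scale equivariant estimator `d₀₂ T₂`, provided the truncation is
active with positive probability. -/
theorem truncated_estimator_dominates (Ω : Type*) [MeasurableSpace Ω]
    (P : Measure Ω) [IsProbabilityMeasure P]
    (m₁ m₂ : ℕ) (hm₁ : 1 ≤ m₁) (hm₂ : 1 ≤ m₂)
    (σ₁ σ₂ p : ℝ) (hσ₁ : 0 < σ₁) (hσ : σ₁ ≤ σ₂) (hp : p ≠ 0)
    (T₁ T₂ : Ω → ℝ) (hT₁ : Measurable T₁) (hT₂ : Measurable T₂)
    (hindep : IndepFun T₁ T₂ P)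
    (hlaw₁ : Measure.map T₁ P = gammaMeasure m₁ (1 / σ₁))
    (hlaw₂ : Measure.map T₂ P = gammaMeasure m₂ (1 / σ₂)) :
    let d₀₂ : ℝ := p⁻¹ * (1 - Real.exp (-p / (m₂ + 1)))
    let e₂ : ℝ := p⁻¹ * (1 - Real.exp (-p / (m₁ + m₂ + 1)))
    let δ : Ω → ℝ := fun ω => max d₀₂ (e₂ * (1 + T₁ ω / T₂ ω)) * T₂ ω
    0 < P {ω | d₀₂ < e₂ * (1 + T₁ ω / T₂ ω)} →
    ∫ ω, (Real.exp (p * (δ ω / σ₂ - 1)) - p * (δ ω / σ₂ - 1) - 1) ∂P <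
      ∫ ω, (Real.exp (p * (d₀₂ * T₂ ω / σ₂ - 1)) - p * (d₀₂ * T₂ ω / σ₂ - 1) - 1) ∂P := by
  intro d₀₂ e₂ δ _
  obtain ⟨k₁, rfl⟩ : ∃ k, m₁ = k + 1 := ⟨m₁ - 1, by omega⟩
  obtain ⟨k₂, rfl⟩ : ∃ k, m₂ = k + 1 := ⟨m₂ - 1, by omega⟩
  have hd : d₀₂ = linexCoeff p (k₂ + 2) := by
    simp only [d₀₂, linexCoeff]; push_cast; ring_nf
  have he : e₂ = linexCoeff p ((k₁ + k₂ + 1 : ℕ) + 2) := by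
    simp only [e₂, linexCoeff]; push_cast; ring_nf
  have hjoint : P.map (fun ω ↦ (T₁ ω, T₂ ω))
      = (gammaMeasure (k₁ + 1 : ℕ) (1 / σ₁)).prod (gammaMeasure (k₂ + 1 : ℕ) (1 / σ₂)) := by
    rw [← hlaw₁, ← hlaw₂]
    exact (indepFun_iff_map_prod_eq_prod_map_map hT₁.aemeasurable hT₂.aemeasurable).mp hindep
  have key := integral_linexLoss_truncated_lt k₁ k₂ hp hσ₁ hσ
  rw [← hjoint, integral_map (hT₁.prodMk hT₂).aemeasurable (by fun_prop),
    integral_map (hT₁.prodMk hT₂).aemeasurable (by fun_prop), ← hd, ← he] at key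
  simpa only [δ, linexLoss, div_mul_eq_mul_div] using key
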